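/- Let S be an E-unitary inverse monoid and θ a unital action of S on an algebra A. If a = Σ_{s∈S} a_s δ_s ∈ L(A,θ,S) satisfies Σ_{s∈C} a_s = 0 for every σ-class C of S, then a lies in the ideal N generated by {a δ_s − a δ_t : a ∈ 1_s A, s ≤ t}. -/
import Mathlib


/-- An inverse monoid structure on a monoid `S`: every element `s` has a unique
generalized inverse `inv s`. -/
structure InverseMonoidStr (S : Type*) [Monoid S] where
  inv : S → S
  mul_inv_mul : ∀ s, s * inv s * s = s
  inv_mul_inv : ∀ s, inv s * s * inv s = inv s
  inv_unique : ∀ s t, s * t * s = s → t * s * t = t → t = inv s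

/-- The natural partial order of an inverse monoid: `s ≤ t` iff `s = f * t`
for some idempotent `f`. -/
def natLE {S : Type*} [Monoid S] (s t : S) : Prop := ∃ f : S, f * f = f ∧ s = f * t

/-- The minimum group congruence `σ` on an inverse monoid:
`(s, t) ∈ σ` iff there is `u` with `u ≤ s` and `u ≤ t`. -/
def sigmaRel {S : Type*} [Monoid S] (s t : S) : Prop := ∃ u : S, natLE u s ∧ natLE u t

/-- An inverse monoid is `E`-unitary if `e ≤ s` with `e` idempotent implies that
`s` is idempotent. -/
def EUnitary (S : Type*) [Monoid S] : Prop :=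
  ∀ u s : S, u * u = u → natLE u s → s * s = s

/-- A unital action `θ` of an inverse monoid `S` on a unital `K`-algebra `A`.
Each `θ s` is an algebra isomorphism from the unital ideal `1_{s⁻¹}A` onto the
unital ideal `1_s A`, where `1_s = e s` is a central idempotent of `A`; here the
partially defined map `θ_s` is encoded by the globally defined map
`a ↦ θ_s(1_{s⁻¹}·a)`, and `θ : S → I(A)` is a homomorphism of monoids with
`θ 1 = id`. -/
structure UnitalAction (K : Type*) [CommRing K] {S : Type*} [Monoid S]
    (I : InverseMonoidStr S) (A : Type*) [Ring A] [Algebra K A] where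
  θ : S → A → A
  e : S → A
  e_idem : ∀ s, e s * e s = e s
  e_central : ∀ s (a : A), e s * a = a * e s
  e_one : e 1 = 1
  theta_add : ∀ s (a b : A), θ s (a + b) = θ s a + θ s b
  theta_mul : ∀ s (a b : A), θ s (a * b) = θ s a * θ s b
  theta_smul : ∀ s (k : K) (a : A), θ s (k • a) = k • θ s a
  theta_dom : ∀ s (a : A), θ s (e (I.inv s) * a) = θ s a
  theta_ran : ∀ s (a : A), e s * θ s a = θ s a
  theta_comp : ∀ s t (a : A), θ (s * t) a = θ s (θ t a)
  theta_one : ∀ a : A, θ 1 a = a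
  theta_inv : ∀ s (a : A), θ (I.inv s) (θ s a) = e (I.inv s) * a
  theta_e : ∀ s, θ s 1 = e s

namespace UnitalAction

variable {K : Type*} [CommRing K] {S : Type*} [Monoid S] {I : InverseMonoidStr S}
  {A : Type*} [Ring A] [Algebra K A]

/-- An action `θ` of `S` on `A` is compatible if `θ_s` and `θ_t` agree on the
intersection `1_{s⁻¹}A ∩ 1_{t⁻¹}A` of their domains whenever `(s,t) ∈ σ`. -/
def Compatible (T : UnitalAction K I A) : Prop :=
  ∀ s t, sigmaRel s t → ∀ a : A, T.θ s (T.e (I.inv t) * a) = T.θ t (T.e (I.inv s) * a)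

/-- The `K`-submodule `D_g = Σ_{s ∈ g} 1_s A` of `A` attached to the σ-class of `t`. -/
def Dsub (T : UnitalAction K I A) (t : S) : Submodule K A :=
  Submodule.span K {x : A | ∃ s : S, ∃ a : A, sigmaRel s t ∧ x = T.e s * a}

/-- The `K`-module `L(A,θ,S) = ⊕_{s ∈ S} 1_s A δ_s` is carried by finitely supported
functions `S →₀ A`; its multiplication is `a δ_s · b δ_t = a θ_s(1_{s⁻¹} b) δ_{st}`. -/
noncomputable def lmul (T : UnitalAction K I A) (f g : S →₀ A) : S →₀ A :=
  f.sum fun s a => g.sum fun t b => Finsupp.single (s * t) (a * T.θ s b)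

/-- The carrier of `L(A,θ,S)` inside `S →₀ A`: functions whose value at `s`
lies in `1_s A`. -/
def LSet (T : UnitalAction K I A) : Set (S →₀ A) :=
  {f : S →₀ A | ∀ s, T.e s * f s = f s}

/-- The generating set `X = {a δ_s − a δ_t : a ∈ 1_s A, s ≤ t}` of the ideal `N`. -/
def XSet (T : UnitalAction K I A) : Set (S →₀ A) :=
  {x : S →₀ A | ∃ s t : S, ∃ a : A, natLE s t ∧ T.e s * a = a ∧
    x = Finsupp.single s a - Finsupp.single t a}

end UnitalAction


section AuxInv
variable {S : Type*} [Monoid S]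

lemma aux_inv_inv (I : InverseMonoidStr S) (s : S) : I.inv (I.inv s) = s :=
  (I.inv_unique (I.inv s) s (I.inv_mul_inv s) (I.mul_inv_mul s)).symm

lemma aux_inv_idem (I : InverseMonoidStr S) {f : S} (hf : f * f = f) : I.inv f = f :=
  (I.inv_unique f f (by rw [hf, hf]) (by rw [hf, hf])).symm

lemma aux_idem_absorb {e : S} (he : e * e = e) (x : S) : e * (e * x) = e * x := by
  rw [← mul_assoc, he]

lemma aux_mul_idem (I : InverseMonoidStr S) {e f : S} (he : e * e = e) (hf : f * f = f) :
    (e * f) * (e * f) = e * f := by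
  set z := I.inv (e * f) with hz
  have hmim := I.mul_inv_mul (e * f)
  have himi := I.inv_mul_inv (e * f)
  rw [← hz] at hmim himi
  simp only [mul_assoc] at hmim himi
  have h1 : (e * f) * (f * (z * e)) * (e * f) = e * f := by
    simp only [mul_assoc]
    rw [aux_idem_absorb hf, aux_idem_absorb he]
    exact hmim
  have h2 : (f * (z * e)) * (e * f) * (f * (z * e)) = f * (z * e) := by
    simp only [mul_assoc]
    rw [aux_idem_absorb he, aux_idem_absorb hf]
    have h3 : z * (e * (f * (z * e))) = z * e := by
      calc z * (e * (f * (z * e)))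
          = (z * (e * (f * z))) * e := by simp only [mul_assoc]
        _ = z * e := by rw [himi]
    rw [h3]
  have hfz : f * (z * e) = z := by
    have h4 := I.inv_unique (e * f) (f * (z * e)) h1 h2
    rw [← hz] at h4; rw [h4]
  have hzidem : z * z = z := by
    have hzz : z * z = (f * (z * e)) * (f * (z * e)) := by rw [hfz]
    rw [hzz]
    calc (f * (z * e)) * (f * (z * e))
        = f * ((z * (e * (f * z))) * e) := by simp only [mul_assoc]
      _ = f * (z * e) := by rw [himi]
      _ = z := hfz
  have h5 : e * f = z := by
    rw [← aux_inv_inv I (e * f), ← hz]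
    exact aux_inv_idem I hzidem
  rw [h5]; exact hzidem

lemma aux_idem_comm (I : InverseMonoidStr S) {e f : S} (he : e * e = e) (hf : f * f = f) :
    e * f = f * e := by
  have hef := aux_mul_idem I he hf
  have hfe := aux_mul_idem I hf he
  have h1 : (e * f) * (f * e) * (e * f) = e * f := by
    simp only [mul_assoc]
    rw [aux_idem_absorb hf, aux_idem_absorb he]
    simpa only [mul_assoc] using hef
  have h2 : (f * e) * (e * f) * (f * e) = f * e := by
    simp only [mul_assoc]
    rw [aux_idem_absorb he, aux_idem_absorb hf]
    simpa only [mul_assoc] using hfe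
  have h3 : f * e = I.inv (e * f) := I.inv_unique (e * f) (f * e) h1 h2
  rw [h3, aux_inv_idem I hef]

lemma aux_inv_mul_self_idem (I : InverseMonoidStr S) (x : S) :
    (I.inv x * x) * (I.inv x * x) = I.inv x * x := by
  have h := I.inv_mul_inv x
  calc (I.inv x * x) * (I.inv x * x)
      = (I.inv x * x * I.inv x) * x := by simp only [mul_assoc]
    _ = I.inv x * x := by rw [h]

lemma aux_mul_inv_self_idem (I : InverseMonoidStr S) (x : S) :
    (x * I.inv x) * (x * I.inv x) = x * I.inv x := by
  have h := I.mul_inv_mul x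
  calc (x * I.inv x) * (x * I.inv x)
      = (x * I.inv x * x) * I.inv x := by simp only [mul_assoc]
    _ = x * I.inv x := by rw [h]

lemma aux_inv_mul (I : InverseMonoidStr S) (x y : S) :
    I.inv (x * y) = I.inv y * I.inv x := by
  refine (I.inv_unique (x * y) (I.inv y * I.inv x) ?_ ?_).symm
  · calc x * y * (I.inv y * I.inv x) * (x * y)
        = x * ((y * I.inv y) * (I.inv x * x)) * y := by simp only [mul_assoc]
      _ = x * ((I.inv x * x) * (y * I.inv y)) * y := by
          rw [aux_idem_comm I (aux_mul_inv_self_idem I y) (aux_inv_mul_self_idem I x)]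
      _ = (x * I.inv x * x) * (y * I.inv y * y) := by simp only [mul_assoc]
      _ = x * y := by rw [I.mul_inv_mul, I.mul_inv_mul]
  · calc I.inv y * I.inv x * (x * y) * (I.inv y * I.inv x)
        = I.inv y * ((I.inv x * x) * (y * I.inv y)) * I.inv x := by simp only [mul_assoc]
      _ = I.inv y * ((y * I.inv y) * (I.inv x * x)) * I.inv x := by
          rw [aux_idem_comm I (aux_inv_mul_self_idem I x) (aux_mul_inv_self_idem I y)]
      _ = (I.inv y * y * I.inv y) * (I.inv x * x * I.inv x) := by simp only [mul_assoc]
      _ = I.inv y * I.inv x := by rw [I.inv_mul_inv, I.inv_mul_inv]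

lemma aux_conj_idem (I : InverseMonoidStr S) (x : S) {f : S} (hf : f * f = f) :
    (x * f * I.inv x) * (x * f * I.inv x) = x * f * I.inv x := by
  calc (x * f * I.inv x) * (x * f * I.inv x)
      = x * (f * (I.inv x * x)) * (f * I.inv x) := by simp only [mul_assoc]
    _ = x * ((I.inv x * x) * f) * (f * I.inv x) := by
        rw [aux_idem_comm I hf (aux_inv_mul_self_idem I x)]
    _ = (x * I.inv x * x) * (f * (f * I.inv x)) := by simp only [mul_assoc]
    _ = x * f * I.inv x := by rw [I.mul_inv_mul, aux_idem_absorb hf, mul_assoc]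

end AuxInv

section AuxLE
variable {S : Type*} [Monoid S]

lemma aux_natLE_refl (s : S) : natLE s s := ⟨1, one_mul 1, (one_mul s).symm⟩

lemma aux_natLE_trans (I : InverseMonoidStr S) {a b c : S} (h1 : natLE a b) (h2 : natLE b c) :
    natLE a c := by
  obtain ⟨f, hf, rfl⟩ := h1
  obtain ⟨g, hg, rfl⟩ := h2
  exact ⟨f * g, aux_mul_idem I hf hg, (mul_assoc f g c).symm⟩

lemma aux_natLE_right (I : InverseMonoidStr S) {u s : S} (h : natLE u s) :
    ∃ h : S, h * h = h ∧ u = s * h := by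
  obtain ⟨f, hf, rfl⟩ := h
  have hidem := aux_conj_idem I (I.inv s) hf
  rw [aux_inv_inv I] at hidem
  refine ⟨I.inv s * f * s, hidem, ?_⟩
  calc f * s = f * (s * I.inv s * s) := by rw [I.mul_inv_mul]
    _ = (f * (s * I.inv s)) * s := by simp only [mul_assoc]
    _ = ((s * I.inv s) * f) * s := by
        rw [aux_idem_comm I hf (aux_mul_inv_self_idem I s)]
    _ = s * (I.inv s * f * s) := by simp only [mul_assoc]

lemma aux_natLE_mul_right {u s : S} (x : S) (h : natLE u s) : natLE (u * x) (s * x) := by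
  obtain ⟨f, hf, rfl⟩ := h
  exact ⟨f, hf, mul_assoc f s x⟩

lemma aux_natLE_mul_left (I : InverseMonoidStr S) {u s : S} (x : S) (h : natLE u s) :
    natLE (x * u) (x * s) := by
  obtain ⟨f, hf, rfl⟩ := h
  refine ⟨x * f * I.inv x, aux_conj_idem I x hf, ?_⟩
  calc x * (f * s)
      = (x * I.inv x * x) * (f * s) := by rw [I.mul_inv_mul]
    _ = x * ((I.inv x * x) * f) * s := by simp only [mul_assoc]
    _ = x * (f * (I.inv x * x)) * s := by
        rw [aux_idem_comm I (aux_inv_mul_self_idem I x) hf]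
    _ = (x * f * I.inv x) * (x * s) := by simp only [mul_assoc]

lemma aux_natLE_inv (I : InverseMonoidStr S) {u s : S} (h : natLE u s) :
    natLE (I.inv u) (I.inv s) := by
  obtain ⟨h', hh', rfl⟩ := aux_natLE_right I h
  rw [aux_inv_mul I]
  exact ⟨I.inv h', by rw [aux_inv_idem I hh']; exact hh', by rw [aux_inv_idem I hh']⟩

lemma aux_sigma_refl (s : S) : sigmaRel s s := ⟨s, aux_natLE_refl s, aux_natLE_refl s⟩

lemma aux_sigma_symm {s t : S} (h : sigmaRel s t) : sigmaRel t s := by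
  obtain ⟨u, h1, h2⟩ := h; exact ⟨u, h2, h1⟩

lemma aux_sigma_trans (I : InverseMonoidStr S) {s t r : S} (h1 : sigmaRel s t)
    (h2 : sigmaRel t r) : sigmaRel s r := by
  obtain ⟨u, hus, hut⟩ := h1
  obtain ⟨v, hvt, hvr⟩ := h2
  obtain ⟨f, hf, huf⟩ := hut
  obtain ⟨g, hg, hvg⟩ := hvt
  have hkey : g * u = f * v := by
    rw [huf, hvg, ← mul_assoc, ← mul_assoc, aux_idem_comm I hg hf]
  refine ⟨g * u, aux_natLE_trans I ⟨g, hg, rfl⟩ hus, ?_⟩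
  exact aux_natLE_trans I ⟨f, hf, hkey⟩ hvr

lemma aux_sigma_inv (I : InverseMonoidStr S) {s t : S} (h : sigmaRel s t) :
    sigmaRel (I.inv s) (I.inv t) := by
  obtain ⟨u, h1, h2⟩ := h
  exact ⟨I.inv u, aux_natLE_inv I h1, aux_natLE_inv I h2⟩

lemma aux_sigma_idem (I : InverseMonoidStr S) (hE : EUnitary S) {s t : S}
    (h : sigmaRel s t) : (I.inv s * t) * (I.inv s * t) = I.inv s * t := by
  obtain ⟨u, hus, hut⟩ := h
  have h4 : natLE (I.inv u * u) (I.inv s * t) :=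
    aux_natLE_trans I (aux_natLE_mul_right u (aux_natLE_inv I hus))
      (aux_natLE_mul_left I (I.inv s) hut)
  exact hE _ _ (aux_inv_mul_self_idem I u) h4

lemma aux_sigma_idem' (I : InverseMonoidStr S) (hE : EUnitary S) {s t : S}
    (h : sigmaRel s t) : (s * I.inv t) * (s * I.inv t) = s * I.inv t := by
  have := aux_sigma_idem I hE (aux_sigma_inv I h)
  rwa [aux_inv_inv I] at this

end AuxLE

section AuxAct
variable {K : Type*} [CommRing K] {S : Type*} [Monoid S] {I : InverseMonoidStr S}
  {A : Type*} [Ring A] [Algebra K A]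

lemma aux_theta_idem (T : UnitalAction K I A) {f : S} (hf : f * f = f) (a : A) :
    T.θ f a = T.e f * a := by
  have h := T.theta_inv f a
  rw [aux_inv_idem I hf] at h
  rw [← h, ← T.theta_comp, hf]

lemma aux_e_mul_idem (T : UnitalAction K I A) {f : S} (hf : f * f = f) (t : S) :
    T.e f * T.e t = T.e (f * t) := by
  rw [← T.theta_e t, ← aux_theta_idem T hf, ← T.theta_comp, T.theta_e]

lemma aux_e_le (T : UnitalAction K I A) {u s : S} (h : natLE u s) :
    T.e u * T.e s = T.e u := by
  obtain ⟨f, hf, rfl⟩ := h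
  rw [← aux_e_mul_idem T hf s, mul_assoc, T.e_idem]

lemma aux_theta_theta_inv (T : UnitalAction K I A) (s : S) (a : A) :
    T.θ s (T.θ (I.inv s) a) = T.e s * a := by
  have h := T.theta_inv (I.inv s) a
  rwa [aux_inv_inv I] at h

lemma aux_e_mul_e (T : UnitalAction K I A) (s t : S) :
    T.e s * T.e t = T.θ s (T.e (I.inv s * t)) := by
  have h1 : T.θ (I.inv s) (T.e t) = T.e (I.inv s * t) := by
    rw [← T.theta_e t, ← T.theta_comp, T.theta_e]
  rw [← h1, aux_theta_theta_inv]

lemma aux_e_u (T : UnitalAction K I A) (s t : S) :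
    T.e (s * (I.inv t * t)) = T.θ s (T.e (I.inv t * t)) := by
  rw [← T.theta_e, T.theta_comp, T.theta_e]

lemma aux_u_le_t (I' : InverseMonoidStr S) (hE : EUnitary S) {s t : S} (hst : sigmaRel s t) :
    natLE (s * (I'.inv t * t)) t :=
  ⟨s * I'.inv t, aux_sigma_idem' I' hE hst, (mul_assoc s (I'.inv t) t).symm⟩

lemma aux_u_le_s (I' : InverseMonoidStr S) (s t : S) :
    natLE (s * (I'.inv t * t)) s := by
  have hti := aux_inv_mul_self_idem I' t
  refine ⟨s * (I'.inv t * t) * I'.inv s, aux_conj_idem I' s hti, ?_⟩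
  calc s * (I'.inv t * t)
      = (s * I'.inv s * s) * (I'.inv t * t) := by rw [I'.mul_inv_mul]
    _ = s * ((I'.inv s * s) * (I'.inv t * t)) := by simp only [mul_assoc]
    _ = s * ((I'.inv t * t) * (I'.inv s * s)) := by
        rw [aux_idem_comm I' (aux_inv_mul_self_idem I' s) hti]
    _ = (s * (I'.inv t * t) * I'.inv s) * s := by simp only [mul_assoc]

lemma aux_e_meet (T : UnitalAction K I A) (hE : EUnitary S) {s t : S} (hst : sigmaRel s t) :
    T.e (s * (I.inv t * t)) * (T.e s * T.e t) = T.e s * T.e t := by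
  have hti := aux_inv_mul_self_idem I t
  have hsti := aux_sigma_idem I hE hst
  have hcomm : (I.inv t * t) * (I.inv s * t) = I.inv s * t := by
    rw [aux_idem_comm I hti hsti]
    calc (I.inv s * t) * (I.inv t * t)
        = I.inv s * (t * I.inv t * t) := by simp only [mul_assoc]
      _ = I.inv s * t := by rw [I.mul_inv_mul]
  rw [aux_e_u T s t, aux_e_mul_e T s t, ← T.theta_mul, aux_e_mul_idem T hti, hcomm]

lemma aux_move (T : UnitalAction K I A) (hE : EUnitary S) {s t : S} (hst : sigmaRel s t)
    {a : A} (has : T.e s * a = a) (hat : T.e t * a = a) :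
    Finsupp.single s a - Finsupp.single t a ∈ Submodule.span K T.XSet := by
  set u := s * (I.inv t * t) with hu
  have hus : natLE u s := aux_u_le_s I s t
  have hut : natLE u t := aux_u_le_t I hE hst
  have hua : T.e u * a = a := by
    calc T.e u * a = T.e u * (T.e s * (T.e t * a)) := by rw [hat, has]
      _ = (T.e u * (T.e s * T.e t)) * a := by simp only [mul_assoc]
      _ = (T.e s * T.e t) * a := by rw [hu, aux_e_meet T hE hst]
      _ = a := by rw [mul_assoc, hat, has]
  have h1 : Finsupp.single u a - Finsupp.single s a ∈ T.XSet := ⟨u, s, a, hus, hua, rfl⟩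
  have h2 : Finsupp.single u a - Finsupp.single t a ∈ T.XSet := ⟨u, t, a, hut, hua, rfl⟩
  have h3 : (Finsupp.single u a - Finsupp.single t a)
      - (Finsupp.single u a - Finsupp.single s a) ∈ Submodule.span K T.XSet :=
    sub_mem (Submodule.subset_span h2) (Submodule.subset_span h1)
  have h4 : Finsupp.single s a - Finsupp.single t a =
      (Finsupp.single u a - Finsupp.single t a) - (Finsupp.single u a - Finsupp.single s a) := by
    abel
  rw [h4]; exact h3

end AuxAct

open UnitalAction in
/-- Let `S` be an `E`-unitary inverse monoid and `θ` a unital action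
of `S` on an algebra `A`.  If `a = Σ_{s∈S} a_s δ_s ∈ L(A,θ,S)` satisfies
`Σ_{s∈C} a_s = 0` for every σ-class `C` of `S`, then `a` lies in the ideal
`N = span_K X`, where `X = {a δ_s − a δ_t : a ∈ 1_s A, s ≤ t}`. -/
theorem eunitary_vanishing_sums_mem_N {K : Type*} [CommRing K] {S : Type*} [Monoid S]
    (I : InverseMonoidStr S) {A : Type*} [Ring A] [Algebra K A]
    (T : UnitalAction K I A) (hE : EUnitary S) [∀ s t : S, Decidable (sigmaRel s t)] :
    ∀ f ∈ T.LSet,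
      (∀ t : S, (∑ s ∈ f.support, if sigmaRel s t then f s else 0) = 0) →
      f ∈ Submodule.span K T.XSet := by
  classical
  suffices H : ∀ n : ℕ, ∀ f : S →₀ A, f ∈ T.LSet →
      (∀ t : S, (∑ s ∈ f.support, if sigmaRel s t then f s else 0) = 0) →
      f.support.card ≤ n → f ∈ Submodule.span K T.XSet by
    intro f hf hsum
    exact H f.support.card f hf hsum le_rfl
  intro n
  induction n with
  | zero =>
    intro f _ _ hcard
    have h0 : f = 0 := by
      rw [← Finsupp.support_eq_empty, ← Finset.card_eq_zero]
      omega
    rw [h0]; exact zero_mem _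
  | succ n ih =>
    intro f hf hsum hcard
    rcases Finset.eq_empty_or_nonempty f.support with hne | ⟨t₀, ht₀⟩
    · rw [Finsupp.support_eq_empty.mp hne]; exact zero_mem _
    set C : Finset S := f.support.filter (fun s => sigmaRel s t₀) with hC
    have ht₀C : t₀ ∈ C := Finset.mem_filter.mpr ⟨ht₀, aux_sigma_refl t₀⟩
    set D : Finset S := C.erase t₀ with hD
    have hD_sub : D ⊆ f.support := fun x hx =>
      (Finset.mem_filter.mp (Finset.mem_of_mem_erase hx)).1
    have hD_t₀ : t₀ ∉ D := Finset.notMem_erase t₀ C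
    have hD_sigma : ∀ x ∈ D, sigmaRel x t₀ := fun x hx =>
      (Finset.mem_filter.mp (Finset.mem_of_mem_erase hx)).2
    have hD_ne : ∀ x ∈ D, x ≠ t₀ := fun x hx => Finset.ne_of_mem_erase hx
    have hCsum : ∑ s ∈ C, f s = 0 := by
      rw [hC, Finset.sum_filter]; exact hsum t₀
    have hDsum : ∑ s ∈ D, f s = - f t₀ := by
      have h : f t₀ + ∑ s ∈ D, f s = 0 := by
        rw [hD]
        simpa using (Finset.add_sum_erase C (fun s => f s) ht₀C).trans hCsum
      exact eq_neg_of_add_eq_zero_left (by rwa [add_comm] at h)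
    set h : S →₀ A := ∑ s ∈ D, Finsupp.single s (T.e t₀ * f s) with hh
    have happly : ∀ x, h x = if x ∈ D then T.e t₀ * f x else 0 := by
      intro x
      rw [hh, Finsupp.finset_sum_apply]
      simp only [Finsupp.single_apply]
      exact Finset.sum_ite_eq' D x (fun s => T.e t₀ * f s)
    set g : S →₀ A := f - Finsupp.single t₀ (f t₀) - h with hg
    have hgapply : ∀ x, g x =
        if x = t₀ then 0 else (if x ∈ D then f x - T.e t₀ * f x else f x) := by
      intro x
      rw [hg]
      simp only [Finsupp.sub_apply, Finsupp.single_apply, happly]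
      by_cases hx : x = t₀
      · subst hx; simp [hD_t₀]
      · have hx' : ¬ (t₀ = x) := fun hc => hx hc.symm
        by_cases hxD : x ∈ D <;> simp [hx, hx', hxD]
    have hfg : f = (Finsupp.single t₀ (f t₀) + h) + g := by rw [hg]; abel
    have hpart : Finsupp.single t₀ (f t₀) + h =
        ∑ s ∈ D, (Finsupp.single s (T.e t₀ * f s) - Finsupp.single t₀ (T.e t₀ * f s)) := by
      rw [Finset.sum_sub_distrib, ← hh]
      have h2 : ∑ s ∈ D, Finsupp.single t₀ (T.e t₀ * f s)
          = Finsupp.single t₀ (T.e t₀ * ∑ s ∈ D, f s) := by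
        rw [Finset.mul_sum]
        exact (map_sum (Finsupp.singleAddHom t₀) (fun s => T.e t₀ * f s) D).symm
      rw [h2, hDsum, mul_neg, hf t₀, Finsupp.single_neg]
      abel
    have hmem1 : Finsupp.single t₀ (f t₀) + h ∈ Submodule.span K T.XSet := by
      rw [hpart]
      refine Submodule.sum_mem _ (fun s hs => ?_)
      refine aux_move T hE (hD_sigma s hs) ?_ ?_
      · rw [← mul_assoc, T.e_central s (T.e t₀), mul_assoc, hf s]
      · rw [← mul_assoc, T.e_idem]
    have hgL : g ∈ T.LSet := by
      intro x
      rw [hgapply x]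
      by_cases hx : x = t₀
      · simp [hx]
      · by_cases hxD : x ∈ D
        · rw [if_neg hx, if_pos hxD, mul_sub, hf x, ← mul_assoc,
            T.e_central x (T.e t₀), mul_assoc, hf x]
        · rw [if_neg hx, if_neg hxD, hf x]
    have hg_supp : g.support ⊆ f.support.erase t₀ := by
      intro x hx
      rw [Finsupp.mem_support_iff] at hx
      rw [Finset.mem_erase, Finsupp.mem_support_iff]
      constructor
      · intro hxt; apply hx; rw [hgapply x, if_pos hxt]
      · intro hfx
        apply hx
        rw [hgapply x]
        have hxD : x ∉ D := fun hxD => (Finsupp.mem_support_iff.mp (hD_sub hxD)) hfx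
        by_cases hxt : x = t₀
        · rw [if_pos hxt]
        · rw [if_neg hxt, if_neg hxD, hfx]
    have hg_sum : ∀ t : S, (∑ s ∈ g.support, if sigmaRel s t then g s else 0) = 0 := by
      intro t
      have hsub : g.support ⊆ f.support := hg_supp.trans (Finset.erase_subset t₀ f.support)
      rw [Finset.sum_subset hsub (fun x _ hx => by
        simp [Finsupp.notMem_support_iff.mp hx])]
      by_cases hto : sigmaRel t₀ t
      · have hstep : ∑ s ∈ f.support, (if sigmaRel s t then g s else 0)
            = ∑ s ∈ f.support, (if sigmaRel s t₀ then g s else 0) :=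
          Finset.sum_congr rfl (fun s _ => if_congr
            ⟨fun hs => aux_sigma_trans I hs (aux_sigma_symm hto),
             fun hs => aux_sigma_trans I hs hto⟩ rfl rfl)
        rw [hstep]
        have hCg : ∑ s ∈ f.support, (if sigmaRel s t₀ then g s else 0) = ∑ s ∈ C, g s := by
          rw [hC, Finset.sum_filter]
        rw [hCg, ← Finset.add_sum_erase C (fun s => g s) ht₀C, ← hD]
        have hgt₀ : g t₀ = 0 := by simp [hgapply t₀]
        rw [hgt₀, zero_add]
        have hDg : ∑ s ∈ D, g s = ∑ s ∈ D, (f s - T.e t₀ * f s) :=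
          Finset.sum_congr rfl (fun s hs => by
            rw [hgapply s, if_neg (hD_ne s hs), if_pos hs])
        rw [hDg, Finset.sum_sub_distrib, ← Finset.mul_sum, hDsum, mul_neg, hf t₀]
        simp
      · have hstep : ∑ s ∈ f.support, (if sigmaRel s t then g s else 0)
            = ∑ s ∈ f.support, (if sigmaRel s t then f s else 0) := by
          refine Finset.sum_congr rfl (fun s _ => ?_)
          by_cases hs : sigmaRel s t
          · rw [if_pos hs, if_pos hs, hgapply s]
            have hst₀ : ¬ sigmaRel s t₀ := fun hc =>
              hto (aux_sigma_trans I (aux_sigma_symm hc) hs)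
            have hsnt : s ≠ t₀ := fun hc => hto (hc ▸ hs)
            have hsD : s ∉ D := fun hD' => hst₀ (hD_sigma s hD')
            rw [if_neg hsnt, if_neg hsD]
          · rw [if_neg hs, if_neg hs]
        rw [hstep]; exact hsum t
    have hg_card : g.support.card ≤ n := by
      have hcc := Finset.card_le_card hg_supp
      rw [Finset.card_erase_of_mem ht₀] at hcc
      omega
    have hgspan := ih g hgL hg_sum hg_card
    rw [hfg]
    exact add_mem hmem1 hgspan
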